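/- Let t > 0, y > t and F(x) = |x| + (x − y)²/(2t). Then lim_{T→0⁺} (1/√T) · (∫_ℝ (x − (y − t))·exp(−F(x)/T) dx) / (∫_ℝ exp(−F(x)/T) dx) = 0, and lim_{T→0⁺} (1/T) · (∫_ℝ (x − (y − t))²·exp(−F(x)/T) dx) / (∫_ℝ exp(−F(x)/T) dx) = t. That is, as an estimator of soft(y,t) = y − t, the random variable X_T(y,t) has asymptotically zero bias at scale √T and mean square error asymptotically equal to T·t. -/

import Mathlib

/-!
Substituting `x = (y - t) + √T u` and using `|x| = x + 2 x⁻`, one gets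
`F(y - t + s) = F(y - t) + s² / (2t) + 2 (y - t + s)⁻`, so the Gibbs density is the constant
`exp (-F(y - t) / T)` times `exp (-u² / (2t) - 2 (y - t + √T u)⁻ / T)`, and the constant cancels
from every moment ratio. Because `y - t > 0`, for fixed `u` the penalty term vanishes once `T` is
small, and dominated convergence by `exp (-u² / (2t))` sends the rescaled `k`-th moment ratio to
the `k`-th moment of `N(0, t)`: `0` for `k = 1` and `t` for `k = 2`.
-/

open Filter MeasureTheory Real Topology

/-- The one-dimensional objective `F(x) = |x| + (x − y)²/(2t)`. -/
noncomputable def obj1 (y t x : ℝ) : ℝ := |x| + (x - y) ^ 2 / (2 * t)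

theorem integrable_pow_mul_exp_neg_mul_sq {b : ℝ} (hb : 0 < b) (k : ℕ) :
    Integrable fun x : ℝ => x ^ k * exp (-b * x ^ 2) := by
  simpa [rpow_natCast] using
    integrable_rpow_mul_exp_neg_mul_sq hb (s := k) (by linarith [k.cast_nonneg (α := ℝ)])

theorem integral_mul_exp_neg_mul_sq (b : ℝ) : ∫ x : ℝ, x * exp (-b * x ^ 2) = 0 := by
  have h := integral_neg_eq_self (fun x : ℝ => x * exp (-b * x ^ 2)) volume
  simp only [neg_sq, neg_mul, integral_neg] at h ⊢
  linarith

theorem integral_sq_mul_exp_neg_mul_sq {b : ℝ} (hb : 0 < b) :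
    ∫ x : ℝ, x ^ 2 * exp (-b * x ^ 2) = (2 * b)⁻¹ * ∫ x : ℝ, exp (-b * x ^ 2) := by
  have hv (x : ℝ) : HasDerivAt (fun x : ℝ => -(2 * b)⁻¹ * exp (-b * x ^ 2))
      (x * exp (-b * x ^ 2)) x := by
    have h := (((hasDerivAt_pow 2 x).const_mul (-b)).exp).const_mul (-(2 * b)⁻¹)
    refine h.congr_deriv ?_
    field_simp
    ring
  have hparts := integral_mul_deriv_eq_deriv_mul_of_integrable
    (fun x _ => hasDerivAt_id x) (fun x _ => hv x)
    (by simpa [Pi.mul_def, sq, mul_assoc] using integrable_pow_mul_exp_neg_mul_sq hb 2)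
    (by simpa [Pi.mul_def] using (integrable_exp_neg_mul_sq hb).const_mul (-(2 * b)⁻¹))
    (by simpa [Pi.mul_def, mul_comm, mul_left_comm] using
      (integrable_mul_exp_neg_mul_sq hb).const_mul (-(2 * b)⁻¹))
  simp only [id, one_mul, integral_const_mul] at hparts
  calc ∫ x : ℝ, x ^ 2 * exp (-b * x ^ 2) = ∫ x : ℝ, x * (x * exp (-b * x ^ 2)) := by
        congr 1 with x
        ring
    _ = _ := by rw [hparts]; ring

theorem integral_eq_mul_integral_comp_add_mul (f : ℝ → ℝ) (c : ℝ) {s : ℝ} (hs : 0 < s) :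
    ∫ x, f x = s * ∫ u, f (c + s * u) := by
  rw [Measure.integral_comp_mul_left (fun v => f (c + v)), integral_add_left_eq_self,
    abs_of_pos (inv_pos.2 hs), smul_eq_mul, mul_inv_cancel_left₀ hs.ne']

section GibbsMoments

variable {t y T : ℝ}

theorem obj1_minimizer_add (hyt : t ≤ y) (ht : t ≠ 0) (s : ℝ) :
    obj1 y t (y - t + s) = obj1 y t (y - t) + s ^ 2 / (2 * t) + 2 * (y - t + s)⁻ := by
  have habs := abs_sub_eq_two_nsmul_negPart (y - t + s)
  rw [nsmul_eq_mul, Nat.cast_ofNat] at habs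
  simp only [obj1, abs_of_nonneg (sub_nonneg.2 hyt)]
  field_simp
  linear_combination (2 * t) * habs

/-- The Gibbs density `exp (-F / T)` at `y - t + √T u`, divided by its value at `y - t`. -/
noncomputable def rescaledWeight (t y T u : ℝ) : ℝ :=
  exp (-(2 * t)⁻¹ * u ^ 2 - 2 * (y - t + √T * u)⁻ / T)

theorem exp_neg_obj1_div_minimizer_add (hyt : t ≤ y) (ht : t ≠ 0) (hT : 0 < T) (u : ℝ) :
    exp (-obj1 y t (y - t + √T * u) / T)
      = exp (-obj1 y t (y - t) / T) * rescaledWeight t y T u := by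
  rw [obj1_minimizer_add hyt ht, rescaledWeight, ← exp_add, mul_pow, sq_sqrt hT.le]
  congr 1
  field_simp
  ring

theorem integral_mul_exp_neg_obj1_div (hyt : t ≤ y) (ht : t ≠ 0) (hT : 0 < T) (g : ℝ → ℝ) :
    ∫ x, g (x - (y - t)) * exp (-obj1 y t x / T)
      = √T * exp (-obj1 y t (y - t) / T) * ∫ u, g (√T * u) * rescaledWeight t y T u := by
  rw [integral_eq_mul_integral_comp_add_mul _ (y - t) (sqrt_pos.2 hT), mul_assoc,
    ← integral_const_mul (exp _)]
  simp_rw [add_sub_cancel_left, exp_neg_obj1_div_minimizer_add hyt ht hT]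
  congr 2 with u
  ring

theorem gibbs_moment_ratio_eq (hyt : t ≤ y) (ht : t ≠ 0) (hT : 0 < T) (k : ℕ) :
    (√T ^ k)⁻¹ * ((∫ x, (x - (y - t)) ^ k * exp (-obj1 y t x / T)) /
        ∫ x, exp (-obj1 y t x / T))
      = (∫ u, u ^ k * rescaledWeight t y T u) / ∫ u, rescaledWeight t y T u := by
  have hmass := integral_mul_exp_neg_obj1_div hyt ht hT (fun _ => 1)
  simp only [one_mul] at hmass
  have hs : √T ≠ 0 := (sqrt_pos.2 hT).ne'
  rw [integral_mul_exp_neg_obj1_div hyt ht hT (· ^ k), hmass,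
    mul_div_mul_left _ _ (mul_ne_zero hs (exp_pos _).ne'), ← mul_div_assoc]
  simp_rw [mul_pow, mul_assoc, integral_const_mul]
  rw [inv_mul_cancel_left₀ (pow_ne_zero k hs)]

theorem rescaledWeight_le (hT : 0 ≤ T) (u : ℝ) :
    rescaledWeight t y T u ≤ exp (-(2 * t)⁻¹ * u ^ 2) := by
  unfold rescaledWeight
  gcongr
  have : 0 ≤ 2 * (y - t + √T * u)⁻ / T := by positivity
  linarith

theorem eventually_rescaledWeight_eq (hyt : t < y) (u : ℝ) :
    ∀ᶠ T in 𝓝[>] 0, rescaledWeight t y T u = exp (-(2 * t)⁻¹ * u ^ 2) := by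
  have hlim : Tendsto (fun T => y - t + √T * u) (𝓝[>] 0) (𝓝 (y - t)) := by
    have : Tendsto (fun T => y - t + √T * u) (𝓝 0) (𝓝 (y - t + √0 * u)) :=
      (continuous_const.add (continuous_sqrt.mul continuous_const)).tendsto 0
    simpa using this.mono_left nhdsWithin_le_nhds
  filter_upwards [hlim.eventually (eventually_gt_nhds (sub_pos.2 hyt))] with T hpos
  simp [rescaledWeight, negPart_eq_zero.2 hpos.le]

theorem tendsto_integral_mul_rescaledWeight (hyt : t < y) {g : ℝ → ℝ} (hg : Continuous g)
    (hgi : Integrable fun u => g u * exp (-(2 * t)⁻¹ * u ^ 2)) :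
    Tendsto (fun T => ∫ u, g u * rescaledWeight t y T u) (𝓝[>] 0)
      (𝓝 (∫ u, g u * exp (-(2 * t)⁻¹ * u ^ 2))) := by
  refine tendsto_integral_filter_of_dominated_convergence
    (fun u => ‖g u * exp (-(2 * t)⁻¹ * u ^ 2)‖) ?_ ?_ hgi.norm ?_
  · refine Eventually.of_forall fun T => (hg.mul ?_).aestronglyMeasurable
    have : Continuous fun u => (y - t + √T * u)⁻ := continuous_negPart.comp (by fun_prop)
    unfold rescaledWeight
    fun_prop
  · filter_upwards [self_mem_nhdsWithin] with T (hT : 0 < T)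
    refine Eventually.of_forall fun u => ?_
    have hw : 0 ≤ rescaledWeight t y T u := (exp_pos _).le
    rw [norm_mul, norm_mul, norm_of_nonneg (exp_pos _).le, norm_of_nonneg hw]
    exact mul_le_mul_of_nonneg_left (rescaledWeight_le hT.le u) (norm_nonneg _)
  · refine Eventually.of_forall fun u => tendsto_const_nhds.congr' ?_
    filter_upwards [eventually_rescaledWeight_eq hyt u] with T hT
    rw [hT]

end GibbsMoments

/-- For `y > t`, as an estimator of `soft(y,t) = y − t`, the random variable `X_T(y,t)`
has asymptotically zero bias at scale `√T` and mean square error asymptotically `T·t`. -/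
theorem stmt19 (t y : ℝ) (ht : 0 < t) (hyt : t < y) :
    Tendsto
      (fun T : ℝ =>
        1 / Real.sqrt T * ((∫ x : ℝ, (x - (y - t)) * Real.exp (-(obj1 y t x) / T)) /
          ∫ x : ℝ, Real.exp (-(obj1 y t x) / T)))
      (nhdsWithin 0 (Set.Ioi 0)) (nhds 0) ∧
    Tendsto
      (fun T : ℝ =>
        1 / T * ((∫ x : ℝ, (x - (y - t)) ^ 2 * Real.exp (-(obj1 y t x) / T)) /
          ∫ x : ℝ, Real.exp (-(obj1 y t x) / T)))
      (nhdsWithin 0 (Set.Ioi 0)) (nhds t) := by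
  have hb : 0 < (2 * t)⁻¹ := by positivity
  have hmass : (∫ u : ℝ, exp (-(2 * t)⁻¹ * u ^ 2)) ≠ 0 := by
    rw [integral_gaussian]
    positivity
  have hmoment (k : ℕ) : Tendsto
      (fun T => (√T ^ k)⁻¹ * ((∫ x, (x - (y - t)) ^ k * exp (-obj1 y t x / T)) /
        ∫ x, exp (-obj1 y t x / T))) (𝓝[>] 0)
      (𝓝 ((∫ u, u ^ k * exp (-(2 * t)⁻¹ * u ^ 2)) / ∫ u, exp (-(2 * t)⁻¹ * u ^ 2))) := by
    have hnum := tendsto_integral_mul_rescaledWeight hyt (continuous_pow k)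
      (integrable_pow_mul_exp_neg_mul_sq hb k)
    have hden := tendsto_integral_mul_rescaledWeight (g := fun _ => 1) hyt continuous_const
      (by simpa only [one_mul] using integrable_exp_neg_mul_sq hb)
    simp only [one_mul] at hden
    refine (hnum.div hden hmass).congr' ?_
    filter_upwards [self_mem_nhdsWithin] with T (hT : 0 < T)
    exact (gibbs_moment_ratio_eq hyt.le ht.ne' hT k).symm
  constructor
  · simpa only [pow_one, one_div, integral_mul_exp_neg_mul_sq, zero_div] using hmoment 1
  · have h2 := hmoment 2
    rw [integral_sq_mul_exp_neg_mul_sq hb, mul_div_assoc, div_self hmass, mul_one,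
      show (2 * (2 * t)⁻¹)⁻¹ = t by field_simp] at h2
    refine h2.congr' ?_
    filter_upwards [self_mem_nhdsWithin] with T (hT : 0 < T)
    rw [sq_sqrt hT.le, one_div]
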